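/- arXiv:1601.03817 — 3 statements merged into one kernel-verified Lean document; each statement's English description precedes it below -/
import Mathlib

section
/- If x ∈ ℝ² is a 3-I vertex point whose ties are exactly the three pairs contained in {i,j,k}, then code(x)_i = code(x)_j = code(x)_k = z + 1 for some integer z with 0 ≤ z ≤ n−3, and the restriction of code(x) to the remaining n−3 indices is a bijection onto {0,1,…,n−1} ∖ {z, z+1, z+2}. -/
/-!
Only the order of the distances `d t = dist x (p t)` matters:
`code t = #{s | d t < d s} + (#{s | d s = d t} - 1) / 2`. The three tied generators share the
value `z + 1`, where `z = #{s | d i < d s}`. Every other generator is tie-free, so its code is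
the number of strictly farther generators; this count is strictly antitone in `d t`, below `z`
when `d t > d i` and at least `z + 3` when `d t < d i`. An injection of the `n - 3` untied
indices into the `n - 3` values of `{0,…,n-1} ∖ {z, z+1, z+2}` is a bijection.
-/

noncomputable section

open Metric

abbrev Pt : Type := EuclideanSpace ℝ (Fin 2)

/-- The chromatic code of a point `x` with respect to generators `p`:
`code p x i` = #{j ≠ i : dist(x,p j) > dist(x,p i)} + (1/2)·#{j ≠ i : dist(x,p j) = dist(x,p i)}. -/
def code {n : ℕ} (p : Fin n → Pt) (x : Pt) (i : Fin n) : ℚ :=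
  (Set.ncard {j : Fin n | j ≠ i ∧ dist x (p i) < dist x (p j)} : ℚ)
  + (1/2) * (Set.ncard {j : Fin n | j ≠ i ∧ dist x (p j) = dist x (p i)} : ℚ)

/-- `{i,j}` is a tie of `x`. -/
def Tie {n : ℕ} (p : Fin n → Pt) (x : Pt) (i j : Fin n) : Prop :=
  i ≠ j ∧ dist x (p i) = dist x (p j)

/-- A cell point has no ties. -/
def CellPoint {n : ℕ} (p : Fin n → Pt) (x : Pt) : Prop :=
  ∀ i j, ¬ Tie p x i j

/-- An edge point has exactly one (unordered) tie. -/
def EdgePoint {n : ℕ} (p : Fin n → Pt) (x : Pt) : Prop :=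
  ∃ i j, Tie p x i j ∧ ∀ u v, Tie p x u v → ({u, v} : Set (Fin n)) = {i, j}

/-- A 2-I vertex point has exactly two ties, forming two disjoint pairs. -/
def Vertex2I {n : ℕ} (p : Fin n → Pt) (x : Pt) : Prop :=
  ∃ i j u v : Fin n, i ≠ j ∧ i ≠ u ∧ i ≠ v ∧ j ≠ u ∧ j ≠ v ∧ u ≠ v ∧
    Tie p x i j ∧ Tie p x u v ∧
    ∀ a b, Tie p x a b → ({a, b} : Set (Fin n)) = {i, j} ∨ ({a, b} : Set (Fin n)) = {u, v}

/-- A 3-I vertex point: its ties are exactly the three pairs contained in some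
3-element subset `{i,j,k}`. -/
def Vertex3I {n : ℕ} (p : Fin n → Pt) (x : Pt) : Prop :=
  ∃ i j k : Fin n, i ≠ j ∧ i ≠ k ∧ j ≠ k ∧
    ∀ a b, Tie p x a b ↔
      (a ≠ b ∧ a ∈ ({i, j, k} : Set (Fin n)) ∧ b ∈ ({i, j, k} : Set (Fin n)))

/-- The chromatic distance between two points. -/
def chromDist {n : ℕ} (p : Fin n → Pt) (x y : Pt) : ℚ :=
  ∑ i, |code p x i - code p y i|

/-- The spatial particle of `x`: the fiber of the chromatic code through `x`. -/
def particle {n : ℕ} (p : Fin n → Pt) (x : Pt) : Set Pt :=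
  {y | code p y = code p x}

/-- The generators are in general position: every point of the plane is one of the four
particle types, and perpendicular bisectors of distinct pairs are distinct non-parallel
lines (any two of them meet in exactly one point). -/
def GeneralPosition {n : ℕ} (p : Fin n → Pt) : Prop :=
  (∀ x : Pt, CellPoint p x ∨ EdgePoint p x ∨ Vertex2I p x ∨ Vertex3I p x) ∧
  (∀ i j u v : Fin n, i ≠ j → u ≠ v → ({i, j} : Set (Fin n)) ≠ {u, v} →
    ∃! x : Pt, dist x (p i) = dist x (p j) ∧ dist x (p u) = dist x (p v))

/-- The set `{0,1,…,n−1}` viewed inside `ℚ`. -/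
def codeRange (n : ℕ) : Set ℚ := {q | ∃ m : ℕ, m < n ∧ q = m}

open Finset

section CountAbove

variable {ι α : Type*} [Fintype ι] [LinearOrder α]

def countAbove (f : ι → α) (a : α) : ℕ := #{s | a < f s}

lemma countAbove_eq_add_of_le (f : ι → α) {a b : α} (hab : a ≤ b) :
    countAbove f a = #{s | a < f s ∧ f s ≤ b} + countAbove f b := by
  rw [countAbove, countAbove, ← card_filter_add_card_filter_not (fun s => f s ≤ b),
    filter_filter, filter_filter]
  congr 2
  ext s
  simp only [mem_filter, mem_univ, true_and, not_le]
  exact ⟨fun h => h.2, fun h => ⟨hab.trans_lt h, h⟩⟩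

lemma countAbove_lt_countAbove_of_lt (f : ι → α) {a : α} {t : ι} (h : a < f t) :
    countAbove f (f t) < countAbove f a := by
  rw [countAbove_eq_add_of_le f h.le, lt_add_iff_pos_left, card_pos]
  exact ⟨t, by simpa using h⟩

lemma countAbove_add_card_fiber_le_countAbove (f : ι → α) {a v : α} (h : a < v) :
    countAbove f v + #{s | f s = v} ≤ countAbove f a := by
  rw [countAbove_eq_add_of_le f h.le, add_comm]
  gcongr
  exact fun hs => ⟨hs ▸ h, hs.le⟩

lemma countAbove_add_card_fiber_le_card (f : ι → α) (v : α) :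
    countAbove f v + #{s | f s = v} ≤ Fintype.card ι := by
  rw [countAbove, ← card_univ, ← card_filter_add_card_filter_not (s := univ) (fun s => v < f s)]
  gcongr
  exact fun hs => hs.not_gt

lemma countAbove_lt_card (f : ι → α) (t : ι) : countAbove f (f t) < Fintype.card ι :=
  card_lt_univ_of_notMem (x := t) (by simp)

theorem bijOn_countAbove (f : ι → α) (v : α) (hinj : Set.InjOn f {t | f t ≠ v}) :
    Set.BijOn (fun t => countAbove f (f t)) {t | f t ≠ v}
      ↑(range (Fintype.card ι) \ Ico (countAbove f v) (countAbove f v + #{s | f s = v})) := by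
  set z := countAbove f v
  set m := #{s | f s = v}
  have hzm := countAbove_add_card_fiber_le_card f v
  have hmaps : Set.MapsTo (fun t => countAbove f (f t)) {t | f t ≠ v}
      ↑(range (Fintype.card ι) \ Ico z (z + m)) := by
    intro t (ht : f t ≠ v)
    simp only [coe_sdiff, coe_range, coe_Ico, Set.mem_sdiff, Set.mem_Iio, Set.mem_Ico, not_and_or,
      not_le, not_lt]
    refine ⟨countAbove_lt_card f t, ?_⟩
    rcases ht.lt_or_gt with hlt | hgt
    · exact .inr (countAbove_add_card_fiber_le_countAbove f hlt)
    · exact .inl (countAbove_lt_countAbove_of_lt f hgt)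
  have hinj' : Set.InjOn (fun t => countAbove f (f t)) {t | f t ≠ v} := by
    intro t ht u hu htu
    by_contra hne
    rcases lt_or_gt_of_ne (mt (hinj ht hu) hne) with hlt | hgt
    · exact (countAbove_lt_countAbove_of_lt f hlt).ne' htu
    · exact (countAbove_lt_countAbove_of_lt f hgt).ne htu
  have hsource : ({t | f t ≠ v} : Set ι) = ↑({t | f t ≠ v} : Finset ι) := by simp
  rw [hsource] at hmaps hinj' ⊢
  refine ⟨hmaps, hinj', surjOn_of_injOn_of_card_le _ hmaps hinj' ?_⟩
  have hsub : Ico z (z + m) ⊆ range (Fintype.card ι) := fun a ha => by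
    simp only [mem_Ico, mem_range] at ha ⊢; omega
  have hcard : m + #{t | f t ≠ v} = Fintype.card ι :=
    card_filter_add_card_filter_not (s := univ) (fun s => f s = v)
  rw [card_sdiff_of_subset hsub, card_range, Nat.card_Ico]
  omega

end CountAbove

lemma codeRange_sdiff_eq_image (n z : ℕ) :
    codeRange n \ {(z : ℚ), (z : ℚ) + 1, (z : ℚ) + 2} =
      (Nat.cast : ℕ → ℚ) '' ↑(range n \ Ico z (z + 3)) := by
  ext q
  simp only [codeRange, Set.mem_sdiff, Set.mem_insert_iff,
    Set.mem_singleton_iff, coe_sdiff, coe_range, coe_Ico, Set.mem_image, Set.mem_Iio,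
    Set.mem_Ico]
  constructor
  · rintro ⟨⟨m, hm, rfl⟩, hq⟩
    refine ⟨m, ⟨hm, fun ⟨h1, h2⟩ => hq ?_⟩, rfl⟩
    obtain rfl | rfl | rfl : m = z ∨ m = z + 1 ∨ m = z + 2 := by omega
    all_goals push_cast; simp
  · rintro ⟨m, ⟨hm, hmz⟩, rfl⟩
    refine ⟨⟨m, hm, rfl⟩, fun hq => hmz ?_⟩
    obtain h | h | h := hq <;> norm_cast at h <;> omega

lemma code_eq_countAbove_add {n : ℕ} (p : Fin n → Pt) (x : Pt) (t : Fin n) :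
    code p x t = countAbove (fun s => dist x (p s)) (dist x (p t)) +
      ((#{s | dist x (p s) = dist x (p t)} : ℚ) - 1) / 2 := by
  set d : Fin n → ℝ := fun s => dist x (p s)
  have habove : ({s | s ≠ t ∧ d t < d s} : Finset (Fin n)) = ({s | d t < d s} : Finset _) :=
    filter_congr fun s _ => and_iff_right_of_imp fun (h : d t < d s) hst => h.ne (by rw [hst])
  have hties :
      ({s | s ≠ t ∧ d s = d t} : Finset (Fin n)) = ({s | d s = d t} : Finset _).erase t := by
    ext s; simp
  have hmem : t ∈ ({s | d s = d t} : Finset (Fin n)) := by simp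
  rw [code, Set.ncard_eq_toFinset_card', Set.ncard_eq_toFinset_card', Set.toFinset_ofPred,
    Set.toFinset_ofPred, habove, hties, card_erase_of_mem hmem, countAbove,
    Nat.cast_sub (card_pos.2 ⟨t, hmem⟩)]
  ring

section Ties

variable {n : ℕ} {p : Fin n → Pt} {x : Pt}

lemma dist_eq_dist_iff_of_tie_iff {T : Set (Fin n)}
    (hT : ∀ a b, Tie p x a b ↔ a ≠ b ∧ a ∈ T ∧ b ∈ T) (s t : Fin n) :
    dist x (p s) = dist x (p t) ↔ s = t ∨ s ∈ T ∧ t ∈ T := by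
  by_cases hst : s = t
  · simp [hst]
  · simpa [hst, Tie] using hT s t

lemma code_eq_countAbove_of_notMem {T : Set (Fin n)}
    (hT : ∀ a b, Tie p x a b ↔ a ≠ b ∧ a ∈ T ∧ b ∈ T) {t : Fin n} (ht : t ∉ T) :
    code p x t = countAbove (fun s => dist x (p s)) (dist x (p t)) := by
  have hfiber : ({s | dist x (p s) = dist x (p t)} : Finset (Fin n)) = {t} := by
    ext s; simp [dist_eq_dist_iff_of_tie_iff hT s t, ht]
  simp [code_eq_countAbove_add, hfiber]

lemma dist_eq_dist_iff_mem_of_tie_iff {T : Set (Fin n)}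
    (hT : ∀ a b, Tie p x a b ↔ a ≠ b ∧ a ∈ T ∧ b ∈ T) {i : Fin n} (hi : i ∈ T)
    (t : Fin n) :
    dist x (p t) = dist x (p i) ↔ t ∈ T := by
  rw [dist_eq_dist_iff_of_tie_iff hT t i]
  exact ⟨fun h => h.elim (· ▸ hi) And.left, fun ht => .inr ⟨ht, hi⟩⟩

variable {i j k : Fin n}

lemma card_filter_dist_eq_eq_three
    (hexact : ∀ a b, Tie p x a b ↔
      a ≠ b ∧ a ∈ ({i, j, k} : Set (Fin n)) ∧ b ∈ ({i, j, k} : Set (Fin n)))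
    (hij : i ≠ j) (hik : i ≠ k) (hjk : j ≠ k) :
    #({s | dist x (p s) = dist x (p i)} : Finset (Fin n)) = 3 := by
  have hfiber : ({s | dist x (p s) = dist x (p i)} : Finset (Fin n)) = {i, j, k} := by
    ext s; simpa using dist_eq_dist_iff_mem_of_tie_iff hexact (Set.mem_insert i _) s
  rw [hfiber, card_insert_of_notMem (by simp [hij, hik]), card_pair hjk]

lemma code_eq_countAbove_add_one
    (hexact : ∀ a b, Tie p x a b ↔
      a ≠ b ∧ a ∈ ({i, j, k} : Set (Fin n)) ∧ b ∈ ({i, j, k} : Set (Fin n)))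
    (hij : i ≠ j) (hik : i ≠ k) (hjk : j ≠ k) {t : Fin n}
    (ht : t ∈ ({i, j, k} : Set (Fin n))) :
    code p x t = countAbove (fun s => dist x (p s)) (dist x (p i)) + 1 := by
  have hti := (dist_eq_dist_iff_mem_of_tie_iff hexact (Set.mem_insert i _) t).2 ht
  rw [code_eq_countAbove_add, hti, card_filter_dist_eq_eq_three hexact hij hik hjk]
  norm_num

end Ties

theorem vertex3I_code_base_general {n : ℕ} (p : Fin n → Pt) (x : Pt) (i j k : Fin n)
    (hij : i ≠ j) (hik : i ≠ k) (hjk : j ≠ k)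
    (hexact : ∀ a b, Tie p x a b ↔
      (a ≠ b ∧ a ∈ ({i, j, k} : Set (Fin n)) ∧ b ∈ ({i, j, k} : Set (Fin n)))) :
    ∃ z : ℕ, z ≤ n - 3 ∧
      code p x i = (z : ℚ) + 1 ∧ code p x j = (z : ℚ) + 1 ∧ code p x k = (z : ℚ) + 1 ∧
      Set.BijOn (code p x) {t : Fin n | t ≠ i ∧ t ≠ j ∧ t ≠ k}
        (codeRange n \ {(z : ℚ), (z : ℚ) + 1, (z : ℚ) + 2}) := by
  set d : Fin n → ℝ := fun s => dist x (p s)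
  have htriple : ∀ t, d t = d i ↔ t ∈ ({i, j, k} : Set (Fin n)) :=
    dist_eq_dist_iff_mem_of_tie_iff hexact (Set.mem_insert i _)
  have hcard : #({s | d s = d i} : Finset (Fin n)) = 3 :=
    card_filter_dist_eq_eq_three hexact hij hik hjk
  have hinj : Set.InjOn d {t | d t ≠ d i} := fun s hs t _ hst =>
    ((dist_eq_dist_iff_of_tie_iff hexact s t).1 hst).resolve_right
      fun h => hs ((htriple s).2 h.1)
  have hbij := bijOn_countAbove d (d i) hinj
  have hbound := countAbove_add_card_fiber_le_card d (d i)
  rw [hcard, Fintype.card_fin] at hbij hbound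
  have hcode_triple t (ht : t ∈ ({i, j, k} : Set (Fin n))) :=
    code_eq_countAbove_add_one hexact hij hik hjk ht
  refine ⟨countAbove d (d i), by omega, hcode_triple i (by simp), hcode_triple j (by simp),
    hcode_triple k (by simp), ?_⟩
  have hrest : {t : Fin n | t ≠ i ∧ t ≠ j ∧ t ≠ k} = {t | d t ≠ d i} := by
    ext t; simp [htriple t]
  rw [hrest, codeRange_sdiff_eq_image]
  exact (Nat.cast_injective.injOn.bijOn_image.comp hbij).congr fun t (ht : d t ≠ d i) =>
    (code_eq_countAbove_of_notMem hexact (mt (htriple t).2 ht)).symm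

/-- a 3-I vertex point whose ties are exactly the pairs of `{i,j,k}` satisfies
`code(x)_i = code(x)_j = code(x)_k = z + 1` for some `0 ≤ z ≤ n−3`, and the restriction of
the code to the remaining `n−3` indices is a bijection onto `{0,…,n−1} ∖ {z, z+1, z+2}`. -/
theorem vertex3I_code_base {n : ℕ} (hn : 2 ≤ n) (p : Fin n → Pt)
    (hp : Function.Injective p) (x : Pt) (i j k : Fin n)
    (hij : i ≠ j) (hik : i ≠ k) (hjk : j ≠ k)
    (hexact : ∀ a b, Tie p x a b ↔
      (a ≠ b ∧ a ∈ ({i, j, k} : Set (Fin n)) ∧ b ∈ ({i, j, k} : Set (Fin n)))) :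
    ∃ z : ℕ, z ≤ n - 3 ∧
      code p x i = (z : ℚ) + 1 ∧ code p x j = (z : ℚ) + 1 ∧ code p x k = (z : ℚ) + 1 ∧
      Set.BijOn (code p x) {t : Fin n | t ≠ i ∧ t ≠ j ∧ t ≠ k}
        (codeRange n \ {(z : ℚ), (z : ℚ) + 1, (z : ℚ) + 2}) :=
  vertex3I_code_base_general p x i j k hij hik hjk hexact
end
end

section
/- Chromatic codes of vertexes are unique: assume that for all distinct unordered pairs {i,j} ≠ {u,v} of indices the perpendicular bisectors satisfy {x ∈ ℝ² : dist(x,p_i) = dist(x,p_j)} ≠ {x ∈ ℝ² : dist(x,p_u) = dist(x,p_v)}. If x and y are vertex points (each either a 2-I vertex point or a 3-I vertex point) and code(x) = code(y), then x = y. -/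
noncomputable section

open Metric

open Set AffineSubspace EuclideanGeometry
open scoped EuclideanSpace

/-! A vertex point has two ties `{a,b} ≠ {c,d}`, so it lies on two distinct perpendicular
bisectors. The code ranks the distances to the generators and gives equal distances equal ranks,
so it determines the ties: a point with the same code lies on the same two bisectors. In the
plane two distinct perpendicular bisectors are lines meeting in at most one point. -/

section MidRank

variable {ι α : Type*} [Finite ι] [LinearOrder α]

def midRank (f : ι → α) (i : ι) : ℚ :=
  (Set.ncard {j : ι | j ≠ i ∧ f i < f j} : ℚ)
  + (1/2) * (Set.ncard {j : ι | j ≠ i ∧ f j = f i} : ℚ)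

theorem midRank_eq (f : ι → α) (i : ι) :
    midRank f i = ncard {j | f i < f j} + ((ncard {j | f j = f i} : ℚ) - 1) / 2 := by
  have hlt : {j | j ≠ i ∧ f i < f j} = {j | f i < f j} := by
    ext j
    simp only [mem_ofPred_eq, and_iff_right_iff_imp]
    exact fun h => (ne_of_lt h).symm ∘ congrArg f
  have heq : {j | j ≠ i ∧ f j = f i} = {j | f j = f i} \ {i} := by
    ext j
    simp only [mem_ofPred_eq, mem_sdiff, mem_singleton_iff]
    tauto
  have hcard := ncard_sdiff_singleton_add_one (s := {j | f j = f i}) (a := i) rfl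
  rw [midRank, hlt, heq, ← hcard]
  push_cast
  ring

theorem midRank_eq_midRank_of_eq {f : ι → α} {i j : ι} (h : f i = f j) :
    midRank f i = midRank f j := by
  rw [midRank_eq, midRank_eq, h]

theorem midRank_lt_midRank_of_lt {f : ι → α} {i j : ι} (h : f i < f j) :
    midRank f j < midRank f i := by
  rw [midRank_eq, midRank_eq]
  have hdisj : Disjoint {k | f j < f k} {k | f k = f j} :=
    disjoint_left.2 fun k hlt heq => (ne_of_lt hlt).symm heq
  have hsub : {k | f j < f k} ∪ {k | f k = f j} ⊆ {k | f i < f k} := by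
    rintro k (hk | hk)
    · exact h.trans hk
    · exact h.trans_eq hk.symm
  have hcard := ncard_le_ncard hsub
  rw [ncard_union_eq hdisj] at hcard
  have hcard' : (ncard {k | f j < f k} : ℚ) + ncard {k | f k = f j} ≤ ncard {k | f i < f k} := by
    exact_mod_cast hcard
  have hi : (1 : ℚ) ≤ ncard {k | f k = f i} := Nat.one_le_cast.2 ((ncard_pos).2 ⟨i, rfl⟩)
  have hj : (1 : ℚ) ≤ ncard {k | f k = f j} := Nat.one_le_cast.2 ((ncard_pos).2 ⟨j, rfl⟩)
  linarith

theorem midRank_eq_midRank_iff {f : ι → α} {i j : ι} : midRank f i = midRank f j ↔ f i = f j := by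
  refine ⟨fun h => ?_, midRank_eq_midRank_of_eq⟩
  rcases lt_trichotomy (f i) (f j) with hlt | heq | hgt
  · exact absurd h (midRank_lt_midRank_of_lt hlt).ne'
  · exact heq
  · exact absurd h (midRank_lt_midRank_of_lt hgt).ne

end MidRank

section PerpBisector

variable {V P : Type*} [NormedAddCommGroup V] [InnerProductSpace ℝ V] [MetricSpace P]
  [NormedAddTorsor V P]

theorem coe_perpBisector (a b : P) : (perpBisector a b : Set P) = {z | dist z a = dist z b} := by
  ext z
  exact mem_perpBisector_iff_dist_eq

theorem collinear_perpBisector [Fact (Module.finrank ℝ V = 2)] {a b : P} (h : a ≠ b) :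
    Collinear ℝ (perpBisector a b : Set P) := by
  have : FiniteDimensional ℝ V := .of_fact_finrank_eq_two
  rw [collinear_iff_finrank_le_one, ← direction_eq_vectorSpan, direction_perpBisector,
    Submodule.finrank_orthogonal_span_singleton (n := 1) (vsub_ne_zero.2 h.symm)]

theorem eq_of_mem_perpBisector_of_mem_perpBisector [Fact (Module.finrank ℝ V = 2)]
    {a b c d x y : P} (hab : a ≠ b) (hcd : c ≠ d) (hne : perpBisector a b ≠ perpBisector c d)
    (hxab : x ∈ perpBisector a b) (hxcd : x ∈ perpBisector c d)
    (hyab : y ∈ perpBisector a b) (hycd : y ∈ perpBisector c d) : x = y := by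
  by_contra hxy
  apply hne
  rw [← affineSpan_coe (perpBisector a b), ← affineSpan_coe (perpBisector c d),
    ← (collinear_perpBisector hab).affineSpan_eq_of_ne hxab hyab hxy,
    ← (collinear_perpBisector hcd).affineSpan_eq_of_ne hxcd hycd hxy]

end PerpBisector

section Code

variable {n : ℕ} {p : Fin n → Pt} {x y : Pt} {i j : Fin n}

theorem code_eq_midRank (p : Fin n → Pt) (x : Pt) : code p x = midRank (fun j => dist x (p j)) :=
  rfl

theorem tie_iff_code_eq : Tie p x i j ↔ i ≠ j ∧ code p x i = code p x j := by
  simp only [Tie, code_eq_midRank, midRank_eq_midRank_iff]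

theorem Tie.of_code_eq (h : code p x = code p y) (ht : Tie p x i j) : Tie p y i j := by
  rw [tie_iff_code_eq, ← h]
  exact tie_iff_code_eq.1 ht

theorem Tie.mem_perpBisector (ht : Tie p x i j) : x ∈ perpBisector (p i) (p j) :=
  mem_perpBisector_iff_dist_eq.2 ht.2

theorem exists_two_ties_of_vertex (hx : Vertex2I p x ∨ Vertex3I p x) :
    ∃ a b c d, Tie p x a b ∧ Tie p x c d ∧ ({a, b} : Set (Fin n)) ≠ {c, d} := by
  rcases hx with ⟨i, j, u, v, -, hiu, hiv, -, -, -, hij, huv, -⟩ | ⟨i, j, k, hij, hik, hjk, ht⟩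
  · exact ⟨i, j, u, v, hij, huv, by rw [Ne, pair_eq_pair_iff]; tauto⟩
  · refine ⟨i, j, i, k, (ht i j).2 ⟨hij, by simp, by simp⟩, (ht i k).2 ⟨hik, by simp, by simp⟩, ?_⟩
    rw [Ne, pair_eq_pair_iff]
    tauto

end Code

theorem vertex_codes_unique_general {n : ℕ} (p : Fin n → Pt)
    (hp : Function.Injective p)
    (hbis : ∀ i j u v : Fin n, i ≠ j → u ≠ v → ({i, j} : Set (Fin n)) ≠ {u, v} →
      {z : Pt | dist z (p i) = dist z (p j)} ≠ {z : Pt | dist z (p u) = dist z (p v)})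
    (x y : Pt)
    (hx : Vertex2I p x ∨ Vertex3I p x)
    (h : code p x = code p y) : x = y := by
  obtain ⟨a, b, c, d, hab, hcd, hne⟩ := exists_two_ties_of_vertex hx
  have hbis' : perpBisector (p a) (p b) ≠ perpBisector (p c) (p d) := fun hL =>
    hbis a b c d hab.1 hcd.1 hne (by rw [← coe_perpBisector, ← coe_perpBisector, hL])
  exact eq_of_mem_perpBisector_of_mem_perpBisector (hp.ne hab.1) (hp.ne hcd.1) hbis'
    hab.mem_perpBisector hcd.mem_perpBisector
    (hab.of_code_eq h).mem_perpBisector (hcd.of_code_eq h).mem_perpBisector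

/-- chromatic codes of vertexes are unique: if perpendicular bisectors of
distinct pairs are distinct, then two vertex points (each 2-I or 3-I) with the same
chromatic code coincide. -/
theorem vertex_codes_unique {n : ℕ} (hn : 2 ≤ n) (p : Fin n → Pt)
    (hp : Function.Injective p)
    (hbis : ∀ i j u v : Fin n, i ≠ j → u ≠ v → ({i, j} : Set (Fin n)) ≠ {u, v} →
      {z : Pt | dist z (p i) = dist z (p j)} ≠ {z : Pt | dist z (p u) = dist z (p v)})
    (x y : Pt)
    (hx : Vertex2I p x ∨ Vertex3I p x) (hy : Vertex2I p y ∨ Vertex3I p y)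
    (h : code p x = code p y) : x = y :=
  vertex_codes_unique_general p hp hbis x y hx h
end
end

section
/- Vertex–edge incidence: let v be a vertex point (2-I or 3-I) and let x be an edge point with edge E = Ω(x). Then v lies in the topological closure of E if and only if δ(v,x) ≤ 2; consequently v does not lie in the closure of E if and only if δ(v,x) > 2. -/
/-!
The code of `y` determines, and is determined by, the preorder of the generators by distance
from `y`. Hence `v` lies in the closure of the particle of `x` iff the preorder at `v` coarsens
the one at `x`: along the segment from `x` to `v` the difference of the squared distances to two
generators is affine, so the points of the open segment keep the preorder of `x`.

For a coarsening, each coordinate of the code moves by at most half the number of ties created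
at that generator, so `δ(v,x) ≤ (#ties at v - #ties at x) / 2 ≤ (6 - 2) / 2`. Otherwise some
comparison at `x` is reversed or split at `v`. A strict comparison between `a` and `b` separates
their codes by `1` plus half their numbers of ties, and a generator whose number of ties changes
parity moves its code by at least `1/2`; for a vertex point these contributions add up to more
than `2`.
-/

noncomputable section

open Metric

section

open scoped Classical

variable {n : ℕ} {p : Fin n → Pt} {x y z v : Pt} {a b c : Fin n}

def farCount (p : Fin n → Pt) (y : Pt) (a : Fin n) : ℕ :=
  (Finset.univ.filter fun b => dist y (p a) < dist y (p b)).card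

def tieCount (p : Fin n → Pt) (y : Pt) (a : Fin n) : ℕ :=
  (Finset.univ.filter fun b => Tie p y a b).card

theorem Tie.symm (h : Tie p y a b) : Tie p y b a := ⟨h.1.symm, h.2.symm⟩

theorem code_eq_farCount_add_tieCount (p : Fin n → Pt) (y : Pt) (a : Fin n) :
    code p y a = farCount p y a + tieCount p y a / 2 := by
  have hfar : {b | b ≠ a ∧ dist y (p a) < dist y (p b)}.ncard = farCount p y a := by
    rw [farCount, ← Set.ncard_coe_finset]
    congr 1
    ext b
    simpa using fun h hb => h.ne (by rw [hb])
  have htie : {b | b ≠ a ∧ dist y (p b) = dist y (p a)}.ncard = tieCount p y a := by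
    rw [tieCount, ← Set.ncard_coe_finset]
    congr 1
    ext b
    rw [Finset.mem_coe, Finset.mem_filter]
    exact ⟨fun h => ⟨Finset.mem_univ b, h.1.symm, h.2.symm⟩, fun h => ⟨h.2.1.symm, h.2.2.symm⟩⟩
  rw [code, hfar, htie]
  ring

theorem code_eq_code_of_dist_eq (h : dist y (p a) = dist y (p b)) : code p y a = code p y b := by
  have hclass : ∀ c, tieCount p y c + 1
      = (Finset.univ.filter fun d => dist y (p c) = dist y (p d)).card := by
    intro c
    rw [tieCount, ← Finset.card_insert_of_notMem (s := Finset.univ.filter _) (a := c)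
      (fun h => (Finset.mem_filter.mp h).2.1 rfl)]
    congr 1
    ext d
    simp only [Finset.mem_insert, Finset.mem_filter, Finset.mem_univ, true_and, Tie]
    grind
  have htie : tieCount p y a + 1 = tieCount p y b + 1 := by rw [hclass, hclass, h]
  rw [code_eq_farCount_add_tieCount, code_eq_farCount_add_tieCount, farCount, farCount, h,
    Nat.add_right_cancel htie]

theorem code_add_le_code_of_dist_lt (h : dist y (p a) < dist y (p b)) :
    code p y b + 1 + (tieCount p y a + tieCount p y b) / 2 ≤ code p y a := by
  have hfar : (farCount p y b + tieCount p y b + 1 : ℚ) ≤ farCount p y a := by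
    have hone : (1 : ℚ) = ∑ c, if c = b then 1 else 0 := by simp
    rw [hone, farCount, farCount, tieCount, Finset.natCast_card_filter, Finset.natCast_card_filter,
      Finset.natCast_card_filter, ← Finset.sum_add_distrib, ← Finset.sum_add_distrib]
    refine Finset.sum_le_sum fun c _ => ?_
    simp only [Tie]
    split_ifs <;> grind
  rw [code_eq_farCount_add_tieCount, code_eq_farCount_add_tieCount]
  linarith

theorem code_le_code_of_dist_le (h : dist y (p a) ≤ dist y (p b)) : code p y b ≤ code p y a := by
  rcases h.lt_or_eq with h | h
  · have := code_add_le_code_of_dist_lt h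
    have : (0 : ℚ) ≤ (tieCount p y a + tieCount p y b) / 2 := by positivity
    linarith
  · exact (code_eq_code_of_dist_eq h).ge

theorem one_le_abs_code_sub (h : dist y (p a) ≠ dist y (p b)) :
    1 ≤ |code p y a - code p y b| := by
  have hnn : ∀ c d, (0 : ℚ) ≤ (tieCount p y c + tieCount p y d) / 2 := fun _ _ => by positivity
  rcases h.lt_or_gt with h | h
  · have := code_add_le_code_of_dist_lt h
    exact le_abs.mpr (Or.inl (by linarith [hnn a b]))
  · have := code_add_le_code_of_dist_lt h
    exact le_abs.mpr (Or.inr (by linarith [hnn b a]))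

theorem dist_le_of_code_eq (h : code p y = code p z) (hab : dist y (p a) ≤ dist y (p b)) :
    dist z (p a) ≤ dist z (p b) := by
  by_contra hba
  have hz := code_add_le_code_of_dist_lt (not_le.mp hba)
  have hy := code_le_code_of_dist_le hab
  have : (0 : ℚ) ≤ (tieCount p z b + tieCount p z a) / 2 := by positivity
  rw [h] at hy
  linarith

theorem code_eq_code_iff :
    code p y = code p z ↔ ∀ a b, (dist y (p a) ≤ dist y (p b) ↔ dist z (p a) ≤ dist z (p b)) := by
  refine ⟨fun h a b => ⟨dist_le_of_code_eq h, dist_le_of_code_eq h.symm⟩, fun h => ?_⟩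
  have hlt : ∀ a b, dist y (p a) < dist y (p b) ↔ dist z (p a) < dist z (p b) := fun a b => by
    rw [← not_le, ← not_le, h]
  have heq : ∀ a b, dist y (p a) = dist y (p b) ↔ dist z (p a) = dist z (p b) := fun a b => by
    rw [le_antisymm_iff, le_antisymm_iff, h, h]
  funext a
  simp only [code, hlt, heq]

/-- The distance preorder of the generators seen from `v` is coarser than the one seen from `x`. -/
def Coarsens (p : Fin n → Pt) (x v : Pt) : Prop :=
  ∀ a b, dist x (p a) ≤ dist x (p b) → dist v (p a) ≤ dist v (p b)

theorem dist_sq_sub_dist_sq_add_smul {E : Type*} [NormedAddCommGroup E] [InnerProductSpace ℝ E]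
    {s t : ℝ} (hst : s + t = 1) (x v q q' : E) :
    dist (s • x + t • v) q' ^ 2 - dist (s • x + t • v) q ^ 2
      = s * (dist x q' ^ 2 - dist x q ^ 2) + t * (dist v q' ^ 2 - dist v q ^ 2) := by
  simp only [dist_eq_norm, norm_sub_sq_real, inner_add_left, real_inner_smul_left]
  obtain rfl : s = 1 - t := by linarith
  ring

theorem openSegment_subset_particle (h : Coarsens p x v) : openSegment ℝ x v ⊆ particle p x := by
  rintro _ ⟨s, t, hs, ht, hst, rfl⟩
  refine code_eq_code_iff.mpr fun a b => ?_
  have hsq : ∀ (w : Pt) (c d : Fin n),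
      dist w (p c) ≤ dist w (p d) ↔ dist w (p c) ^ 2 ≤ dist w (p d) ^ 2 :=
    fun w c d => (sq_le_sq₀ dist_nonneg dist_nonneg).symm
  have hsum := dist_sq_sub_dist_sq_add_smul hst x v (p a) (p b)
  rw [hsq, hsq x]
  constructor
  · intro hy
    by_contra hx
    have hv := (hsq v b a).mp (h b a ((hsq x b a).mpr (not_le.mp hx).le))
    nlinarith [mul_pos hs (sub_pos.mpr (not_le.mp hx))]
  · intro hx
    have hv := (hsq v a b).mp (h a b ((hsq x a b).mpr hx))
    nlinarith

theorem mem_closure_particle_iff : v ∈ closure (particle p x) ↔ Coarsens p x v := by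
  refine ⟨fun hv a b hab => ?_, fun h => closure_mono (openSegment_subset_particle h)
    (segment_subset_closure_openSegment (right_mem_segment ℝ x v))⟩
  have hclosed : IsClosed {y : Pt | dist y (p a) ≤ dist y (p b)} :=
    isClosed_le (by fun_prop) (by fun_prop)
  exact closure_minimal (fun y hy => dist_le_of_code_eq (Eq.symm hy) hab) hclosed hv

theorem half_le_abs_code_sub_of_odd (h : Odd (tieCount p y a + tieCount p z a)) :
    1 / 2 ≤ |code p y a - code p z a| := by
  obtain ⟨r, hr⟩ := h
  set m : ℤ := farCount p y a - farCount p z a + r - tieCount p z a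
  have hm : 2 * (code p y a - code p z a) = 2 * m + 1 := by
    have hr' : (tieCount p y a + tieCount p z a : ℚ) = 2 * r + 1 := by exact_mod_cast hr
    rw [code_eq_farCount_add_tieCount, code_eq_farCount_add_tieCount]
    push_cast [m]
    linarith
  have hodd : (1 : ℚ) ≤ |2 * (m : ℚ) + 1| := by exact_mod_cast Int.one_le_abs (by omega)
  rw [← hm, abs_mul, abs_two] at hodd
  linarith

theorem abs_code_sub_le_of_coarsens (h : Coarsens p x v) (a : Fin n) :
    |code p v a - code p x a| ≤ ((tieCount p v a : ℚ) - tieCount p x a) / 2 := by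
  have hcode : ∀ y, code p y a = ∑ b, ((if dist y (p a) < dist y (p b) then 1 else 0)
      + (if Tie p y a b then 1 else 0) / 2) := fun y => by
    rw [code_eq_farCount_add_tieCount, farCount, tieCount, Finset.natCast_card_filter,
      Finset.natCast_card_filter, Finset.sum_add_distrib, Finset.sum_div]
  have htie : ((tieCount p v a : ℚ) - tieCount p x a) / 2
      = ∑ b, ((if Tie p v a b then 1 else 0) - (if Tie p x a b then 1 else 0)) / 2 := by
    rw [tieCount, tieCount, Finset.natCast_card_filter, Finset.natCast_card_filter,
      ← Finset.sum_div, Finset.sum_sub_distrib]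
  rw [hcode, hcode, ← Finset.sum_sub_distrib, htie]
  refine (Finset.abs_sum_le_sum_abs _ _).trans (Finset.sum_le_sum fun b _ => ?_)
  have hab := h a b
  have hba := h b a
  simp only [Tie]
  split_ifs <;> grind

theorem chromDist_le_of_coarsens (h : Coarsens p x v) :
    chromDist p v x ≤ ((∑ a, tieCount p v a : ℕ) - (∑ a, tieCount p x a : ℕ) : ℚ) / 2 := by
  push_cast
  rw [← Finset.sum_sub_distrib, Finset.sum_div]
  exact Finset.sum_le_sum fun a _ => abs_code_sub_le_of_coarsens h a

theorem sum_abs_code_sub_le_chromDist (s : Finset (Fin n)) :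
    ∑ a ∈ s, |code p y a - code p z a| ≤ chromDist p y z :=
  Finset.sum_le_sum_of_subset_of_nonneg (Finset.subset_univ s) fun _ _ _ => abs_nonneg _

theorem five_halves_le_chromDist_of_reversed (hz : dist z (p a) < dist z (p b))
    (hy : dist y (p b) < dist y (p a)) (hc : Odd (tieCount p y c + tieCount p z c)) :
    5 / 2 ≤ chromDist p y z := by
  have hab : a ≠ b := by rintro rfl; exact lt_irrefl _ hz
  set t := tieCount p z a + tieCount p z b + tieCount p y b + tieCount p y a with ht
  have hpair : 2 + (t : ℚ) / 2 ≤ |code p y a - code p z a| + |code p y b - code p z b| := by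
    have hgz := code_add_le_code_of_dist_lt hz
    have hgy := code_add_le_code_of_dist_lt hy
    rw [ht]
    push_cast
    linarith [neg_abs_le (code p y a - code p z a), le_abs_self (code p y b - code p z b)]
  by_cases hcab : c = a ∨ c = b
  · have hδ := sum_abs_code_sub_le_chromDist (p := p) (y := y) (z := z) {a, b}
    rw [Finset.sum_pair hab] at hδ
    have : 1 ≤ t := by rcases hcab with rfl | rfl <;> linarith [hc.pos]
    have : (1 : ℚ) ≤ t := by exact_mod_cast this
    linarith
  · push Not at hcab
    have hδ := sum_abs_code_sub_le_chromDist (p := p) (y := y) (z := z) {a, b, c}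
    rw [Finset.sum_insert (by simp [hab, hcab.1.symm]), Finset.sum_pair hcab.2.symm] at hδ
    have : (0 : ℚ) ≤ t := by positivity
    linarith [half_le_abs_code_sub_of_odd hc]

theorem one_le_tieCount (h : Tie p y a b) : 1 ≤ tieCount p y a :=
  Finset.card_pos.mpr ⟨b, Finset.mem_filter.mpr ⟨Finset.mem_univ b, h⟩⟩

theorem tieCount_eq_zero (h : ∀ b, ¬ Tie p y a b) : tieCount p y a = 0 :=
  Finset.card_eq_zero.mpr (Finset.filter_eq_empty_iff.mpr fun b _ => h b)

theorem tieCount_eq_one (h : Tie p y a b) (hu : ∀ c, Tie p y a c → c = b) :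
    tieCount p y a = 1 :=
  Finset.card_eq_one.mpr ⟨b, Finset.ext fun c => by
    simpa only [Finset.mem_filter, Finset.mem_univ, true_and, Finset.mem_singleton] using
      ⟨hu c, fun hc => hc ▸ h⟩⟩

theorem two_le_sum_tieCount (h : Tie p y a b) : 2 ≤ ∑ c, tieCount p y c := by
  calc 2 ≤ tieCount p y a + tieCount p y b := by
        linarith [one_le_tieCount h, one_le_tieCount h.symm]
    _ = ∑ c ∈ {a, b}, tieCount p y c := (Finset.sum_pair h.1).symm
    _ ≤ ∑ c, tieCount p y c := Finset.sum_le_univ_sum_of_nonneg fun _ => Nat.zero_le _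

theorem EdgePoint.pair_eq (hx : EdgePoint p x) (hab : Tie p x a b) {u w : Fin n}
    (huw : Tie p x u w) : ({u, w} : Set (Fin n)) = {a, b} := by
  obtain ⟨i, j, -, huniq⟩ := hx
  rw [huniq u w huw, huniq a b hab]

theorem EdgePoint.tieCount_eq_one (hx : EdgePoint p x) (hab : Tie p x a b) :
    tieCount p x a = 1 :=
  _root_.tieCount_eq_one hab fun c hac => by
    rcases Set.pair_eq_pair_iff.mp (hx.pair_eq hab hac) with ⟨-, h⟩ | ⟨h, -⟩
    · exact h
    · exact absurd h hab.1

theorem EdgePoint.tieCount_eq_zero (hx : EdgePoint p x) (hab : Tie p x a b) (hca : c ≠ a)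
    (hcb : c ≠ b) : tieCount p x c = 0 :=
  _root_.tieCount_eq_zero fun d hcd => by
    rcases Set.pair_eq_pair_iff.mp (hx.pair_eq hab hcd) with ⟨h, -⟩ | ⟨h, -⟩
    exacts [hca h, hcb h]

theorem Vertex2I.exists_tieCount (hv : Vertex2I p v) :
    ∃ S : Finset (Fin n), S.card = 4 ∧ ∀ c, tieCount p v c = if c ∈ S then 1 else 0 := by
  obtain ⟨i, j, u, w, hij, hiu, hiw, hju, hjw, huw, htij, htuw, hall⟩ := hv
  refine ⟨{i, j, u, w}, by simp [*], fun c => ?_⟩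
  split_ifs with hc
  · obtain ⟨d, hcd⟩ : ∃ d, Tie p v c d := by
      simp only [Finset.mem_insert, Finset.mem_singleton] at hc
      rcases hc with rfl | rfl | rfl | rfl
      exacts [⟨j, htij⟩, ⟨i, htij.symm⟩, ⟨w, htuw⟩, ⟨u, htuw.symm⟩]
    refine tieCount_eq_one hcd fun e hce => ?_
    have := hall c d hcd
    have := hall c e hce
    simp only [Set.pair_eq_pair_iff] at *
    grind
  · refine tieCount_eq_zero fun d hcd => hc ?_
    have := hall c d hcd
    simp only [Set.pair_eq_pair_iff, Finset.mem_insert, Finset.mem_singleton] at *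
    grind

theorem Vertex3I.exists_tieCount (hv : Vertex3I p v) :
    ∃ T : Finset (Fin n), T.card = 3 ∧ ∀ c, tieCount p v c = if c ∈ T then 2 else 0 := by
  obtain ⟨i, j, k, hij, hik, hjk, htie⟩ := hv
  refine ⟨{i, j, k}, by simp [*], fun c => ?_⟩
  have hfilter : Finset.univ.filter (fun d => Tie p v c d)
      = if c ∈ ({i, j, k} : Finset (Fin n)) then ({i, j, k} : Finset (Fin n)).erase c else ∅ := by
    ext d
    simp only [Finset.mem_filter, Finset.mem_univ, true_and, htie]
    split_ifs with hc <;> simp_all [ne_comm]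
  rw [tieCount, hfilter]
  split_ifs with hc
  · rw [Finset.card_erase_of_mem hc]
    simp [*]
  · rfl

theorem sum_tieCount_le_six (hv : Vertex2I p v ∨ Vertex3I p v) : ∑ c, tieCount p v c ≤ 6 := by
  rcases hv with hv | hv
  · obtain ⟨S, hS, hcount⟩ := hv.exists_tieCount
    simp [hcount, hS]
  · obtain ⟨T, hT, hcount⟩ := hv.exists_tieCount
    simp [hcount, hT]

theorem exists_odd_tieCount_add (hv : Vertex2I p v ∨ Vertex3I p v) (hx : EdgePoint p x) :
    ∃ c, Odd (tieCount p v c + tieCount p x c) := by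
  obtain ⟨a, b, hab, -⟩ := id hx
  rcases hv with hv | hv
  · obtain ⟨S, hS, hcount⟩ := hv.exists_tieCount
    obtain ⟨c, hcS, hcab⟩ := Finset.exists_mem_notMem_of_card_lt_card
      (s := {a, b}) (t := S) (by linarith [Finset.card_le_two (a := a) (b := b)])
    simp only [Finset.mem_insert, Finset.mem_singleton, not_or] at hcab
    refine ⟨c, ?_⟩
    rw [hcount, if_pos hcS, hx.tieCount_eq_zero hab hcab.1 hcab.2]
    decide
  · obtain ⟨T, -, hcount⟩ := hv.exists_tieCount
    refine ⟨a, ?_⟩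
    rw [hcount, hx.tieCount_eq_one hab]
    split_ifs <;> decide

/-- `g` is nonnegative off `{a, b}` by parity, while the gap between the codes of `a` and `b`
at `v` pays for `g a + g b ≥ 1`; summing, `δ(v,x) ≥ 1 + (∑ c, tieCount p v c) / 2 = 3`. -/
theorem Vertex2I.three_le_chromDist_of_split_tie (hv : Vertex2I p v) (hx : EdgePoint p x)
    (hab : Tie p x a b) (hba : dist v (p b) < dist v (p a)) : 3 ≤ chromDist p v x := by
  obtain ⟨S, hS, hcount⟩ := hv.exists_tieCount
  set g : Fin n → ℚ := fun c => |code p v c - code p x c| - tieCount p v c / 2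
  have hrest : ∀ c ∈ Finset.univ, c ∉ ({a, b} : Finset (Fin n)) → 0 ≤ g c := by
    intro c _ hc
    simp only [Finset.mem_insert, Finset.mem_singleton, not_or] at hc
    have hx0 := hx.tieCount_eq_zero hab hc.1 hc.2
    have hodd := half_le_abs_code_sub_of_odd (p := p) (y := v) (z := x) (a := c)
    simp only [g, hcount, hx0] at hodd ⊢
    split_ifs at hodd ⊢
    · push_cast
      linarith [hodd (by decide)]
    · simp
  have hpair : 1 ≤ g a + g b := by
    have hgap := code_add_le_code_of_dist_lt hba
    have hxab := code_eq_code_of_dist_eq hab.2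
    simp only [g]
    linarith [neg_abs_le (code p v a - code p x a), le_abs_self (code p v b - code p x b)]
  have hsum : ∑ c, g c = chromDist p v x - 2 := by
    have h4 : ∑ c, tieCount p v c = 4 := by simp [hcount, hS]
    simp only [g, Finset.sum_sub_distrib, ← Finset.sum_div, ← Nat.cast_sum, h4, chromDist]
    norm_num
  have := Finset.sum_le_sum_of_subset_of_nonneg (Finset.subset_univ {a, b}) hrest
  rw [Finset.sum_pair hab.1] at this
  linarith

theorem two_le_abs_sub_add_abs_sub_add_abs_sub {𝕜 : Type*} [Field 𝕜] [LinearOrder 𝕜]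
    [IsStrictOrderedRing 𝕜] {m q₁ q₂ q₃ : 𝕜} (h₁₂ : 1 ≤ |q₁ - q₂|) (h₁₃ : 1 ≤ |q₁ - q₃|)
    (h₂₃ : 1 ≤ |q₂ - q₃|) : 2 ≤ |m - q₁| + |m - q₂| + |m - q₃| := by
  rcases abs_cases (q₁ - q₂) with ⟨e₁₂, -⟩ | ⟨e₁₂, -⟩ <;>
    rcases abs_cases (q₁ - q₃) with ⟨e₁₃, -⟩ | ⟨e₁₃, -⟩ <;>
    rcases abs_cases (q₂ - q₃) with ⟨e₂₃, -⟩ | ⟨e₂₃, -⟩ <;>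
    rw [e₁₂] at h₁₂ <;> rw [e₁₃] at h₁₃ <;> rw [e₂₃] at h₂₃ <;>
    linarith [le_abs_self (m - q₁), neg_abs_le (m - q₁), le_abs_self (m - q₂),
      neg_abs_le (m - q₂), le_abs_self (m - q₃), neg_abs_le (m - q₃)]

theorem two_le_sum_abs_code_sub {t₁ t₂ t₃ : Fin n} (hy₂ : dist y (p t₁) = dist y (p t₂))
    (hy₃ : dist y (p t₁) = dist y (p t₃)) (hz₁₂ : dist z (p t₁) ≠ dist z (p t₂))
    (hz₁₃ : dist z (p t₁) ≠ dist z (p t₃)) (hz₂₃ : dist z (p t₂) ≠ dist z (p t₃)) :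
    2 ≤ |code p y t₁ - code p z t₁| + |code p y t₂ - code p z t₂|
      + |code p y t₃ - code p z t₃| := by
  rw [← code_eq_code_of_dist_eq hy₂, ← code_eq_code_of_dist_eq hy₃]
  exact two_le_abs_sub_add_abs_sub_add_abs_sub (one_le_abs_code_sub hz₁₂)
    (one_le_abs_code_sub hz₁₃) (one_le_abs_code_sub hz₂₃)

/-- At `v` the codes agree on the tied triple, at `x` they are pairwise `1` apart, which costs `2`;
the generator of `{a, b}` outside the triple changes the parity of its number of ties. -/
theorem Vertex3I.five_halves_le_chromDist_of_split_tie (hv : Vertex3I p v) (hx : EdgePoint p x)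
    (hab : Tie p x a b) (hvab : ¬ Tie p v a b) : 5 / 2 ≤ chromDist p v x := by
  obtain ⟨i, j, k, hij, hik, hjk, htie⟩ := hv
  set T : Set (Fin n) := {i, j, k}
  have hxT : ∀ t t', t ∈ T → t' ∈ T → t ≠ t' → dist x (p t) ≠ dist x (p t') := by
    intro t t' ht ht' htt' heq
    have hpair := hx.pair_eq hab ⟨htt', heq⟩
    have hmem : ∀ e ∈ ({a, b} : Set (Fin n)), e ∈ T := fun e he => by
      rw [← hpair] at he
      rcases he with rfl | rfl <;> assumption
    exact hvab ((htie a b).mpr ⟨hab.1, hmem a (by simp), hmem b (by simp)⟩)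
  have hvT : ∀ t t', t ∈ T → t' ∈ T → t ≠ t' → dist v (p t) = dist v (p t') :=
    fun t t' ht ht' htt' => ((htie t t').mpr ⟨htt', ht, ht'⟩).2
  obtain ⟨c, hcT, hxc⟩ : ∃ c, c ∉ T ∧ tieCount p x c = 1 := by
    by_cases ha : a ∈ T
    · exact ⟨b, fun hb => hvab ((htie a b).mpr ⟨hab.1, ha, hb⟩), hx.tieCount_eq_one hab.symm⟩
    · exact ⟨a, ha, hx.tieCount_eq_one hab⟩
  have hvc : tieCount p v c = 0 := tieCount_eq_zero fun d hcd => hcT ((htie c d).mp hcd).2.1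
  have hc := half_le_abs_code_sub_of_odd (p := p) (y := v) (z := x) (a := c)
    (by rw [hvc, hxc]; decide)
  have hi : i ∈ T := by simp [T]
  have hj : j ∈ T := by simp [T]
  have hk : k ∈ T := by simp [T]
  have hspread := two_le_sum_abs_code_sub (hvT i j hi hj hij) (hvT i k hi hk hik)
    (hxT i j hi hj hij) (hxT i k hi hk hik) (hxT j k hj hk hjk)
  have hδ := sum_abs_code_sub_le_chromDist (p := p) (y := v) (z := x) {i, j, k, c}
  have hci : c ≠ i := fun h => hcT (h ▸ hi)
  have hcj : c ≠ j := fun h => hcT (h ▸ hj)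
  have hck : c ≠ k := fun h => hcT (h ▸ hk)
  rw [Finset.sum_insert (by simp [hij, hik, hci.symm]), Finset.sum_insert (by simp [hjk, hcj.symm]),
    Finset.sum_pair hck.symm] at hδ
  linarith

theorem chromDist_le_two_of_coarsens (hv : Vertex2I p v ∨ Vertex3I p v) (hx : EdgePoint p x)
    (h : Coarsens p x v) : chromDist p v x ≤ 2 := by
  obtain ⟨a, b, hab, -⟩ := hx
  have hv6 : ((∑ c, tieCount p v c : ℕ) : ℚ) ≤ 6 := by exact_mod_cast sum_tieCount_le_six hv
  have hx2 : (2 : ℚ) ≤ ((∑ c, tieCount p x c : ℕ) : ℚ) := by exact_mod_cast two_le_sum_tieCount hab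
  linarith [chromDist_le_of_coarsens h]

theorem coarsens_of_chromDist_le_two (hv : Vertex2I p v ∨ Vertex3I p v) (hx : EdgePoint p x)
    (h : chromDist p v x ≤ 2) : Coarsens p x v := by
  intro a b hab
  by_contra hba
  rw [not_le] at hba
  rcases hab.lt_or_eq with hlt | heq
  · obtain ⟨c, hc⟩ := exists_odd_tieCount_add hv hx
    linarith [five_halves_le_chromDist_of_reversed hlt hba hc]
  · have htie : Tie p x a b := ⟨fun hab => (hab ▸ hba).false, heq⟩
    rcases hv with hv | hv
    · linarith [hv.three_le_chromDist_of_split_tie hx htie hba]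
    · linarith [hv.five_halves_le_chromDist_of_split_tie hx htie fun hvab => hba.ne hvab.2.symm]

end

theorem vertex_edge_incidence_general {n : ℕ} (p : Fin n → Pt) (v x : Pt)
    (hv : Vertex2I p v ∨ Vertex3I p v) (hx : EdgePoint p x) :
    (v ∈ closure (particle p x) ↔ chromDist p v x ≤ 2) ∧
    (v ∉ closure (particle p x) ↔ 2 < chromDist p v x) := by
  have key : v ∈ closure (particle p x) ↔ chromDist p v x ≤ 2 := by
    rw [mem_closure_particle_iff]
    exact ⟨chromDist_le_two_of_coarsens hv hx, coarsens_of_chromDist_le_two hv hx⟩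
  exact ⟨key, by rw [key, not_le]⟩

/-- vertex–edge incidence: a vertex point `v` (2-I or 3-I) lies in the closure
of the edge `Ω(x)` of an edge point `x` iff `δ(v,x) ≤ 2`; consequently it does not lie in the
closure iff `δ(v,x) > 2`. -/
theorem vertex_edge_incidence {n : ℕ} (hn : 2 ≤ n) (p : Fin n → Pt)
    (hp : Function.Injective p) (v x : Pt)
    (hv : Vertex2I p v ∨ Vertex3I p v) (hx : EdgePoint p x) :
    (v ∈ closure (particle p x) ↔ chromDist p v x ≤ 2) ∧
    (v ∉ closure (particle p x) ↔ 2 < chromDist p v x) :=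
  vertex_edge_incidence_general p v x hv hx
end
end
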